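/- arXiv:1909.10177 — 3 statements merged into one kernel-verified Lean document; each statement's English description precedes it below -/
import Mathlib

section
/- Let c and c' be two binary strings of length m, each starting and ending with 1 and containing only 1-runs and 2-runs. If s is a longest common subsequence of c and c', then there exists a string s_sub that starts and ends with 1, contains only 1-runs and 2-runs, has |s_sub| = |s|, and is a common subsequence of both c and c'. -/
/-- `s` starts and ends with the symbol `1` (`true`) and all its maximal runs
have length 1 or 2. -/
def InS (s : List Bool) : Prop :=
  s.head? = some true ∧ s.getLast? = some true ∧
    ∀ r ∈ s.splitBy (· == ·), r.length = 1 ∨ r.length = 2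

/-- The number of runs of a binary string. -/
def runsCount (s : List Bool) : ℕ := (s.splitBy (· == ·)).length

/-- The number of runs of length 1 of a binary string. -/
def oneRuns (s : List Bool) : ℕ :=
  ((s.splitBy (· == ·)).filter (fun r => r.length == 1)).length

/-- The number of runs of length 2 of a binary string. -/
def twoRuns (s : List Bool) : ℕ :=
  ((s.splitBy (· == ·)).filter (fun r => r.length == 2)).length

/-!
A longest common subsequence `s` of `c, c' ∈ S` starts and ends with `1`, since otherwise a `1`
could be prepended or appended to it. If `s` contains a block `aaa`, any embedding of it into a
string with no three equal consecutive symbols passes over a `¬a` between the outer two `a`s, so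
flipping the middle bit keeps `s` a common subsequence of `c` and `c'`. Flipping preserves the
length and both endpoints and lowers the number of equal adjacent pairs by two, so repeating it
ends in a string whose runs have length at most 2.
-/

open List

def NoTripleRun {α : Type*} (l : List α) : Prop := ∀ a, ¬ [a, a, a] <:+: l

section NoTripleRun

variable {α : Type*}

theorem NoTripleRun.of_infix {l₁ l₂ : List α} (h : NoTripleRun l₂) (hl : l₁ <:+: l₂) :
    NoTripleRun l₁ :=
  fun a ha => h a (ha.trans hl)

theorem noTripleRun_nil : NoTripleRun ([] : List α) :=
  fun _ h => by simpa using h.length_le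

theorem noTripleRun_cons_iff {a : α} {l : List α} :
    NoTripleRun (a :: l) ↔ NoTripleRun l ∧ ¬ [a, a] <+: l := by
  simp only [NoTripleRun, infix_cons_iff, cons_prefix_cons, not_or, forall_and]
  constructor
  · exact fun ⟨h, hl⟩ => ⟨hl, fun ha => h a ⟨rfl, ha⟩⟩
  · rintro ⟨hl, ha⟩
    exact ⟨fun b ⟨hb, hbl⟩ => ha (hb ▸ hbl), hl⟩

theorem noTripleRun_cons_of_head?_ne {a : α} {l : List α} (hl : NoTripleRun l)
    (ha : l.head? ≠ some a) : NoTripleRun (a :: l) :=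
  noTripleRun_cons_iff.2 ⟨hl, fun h => ha (by obtain ⟨_, rfl⟩ := h; rfl)⟩

theorem noTripleRun_cons_cons_of_head?_ne {a : α} {l : List α} (hl : NoTripleRun l)
    (ha : l.head? ≠ some a) : NoTripleRun (a :: a :: l) :=
  noTripleRun_cons_iff.2 ⟨noTripleRun_cons_of_head?_ne hl ha,
    fun h => ha (by obtain ⟨_, rfl⟩ := (cons_prefix_cons.1 h).2; rfl)⟩

theorem exists_eq_append_triple_of_not_noTripleRun {l : List α} (h : ¬ NoTripleRun l) :
    ∃ u a v, l = u ++ a :: a :: a :: v := by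
  simp only [NoTripleRun, not_forall, not_not] at h
  obtain ⟨a, u, v, rfl⟩ := h
  exact ⟨u, a, v, by simp⟩

variable [DecidableEq α]

theorem noTripleRun_flatten {L : List (List α)} (hn : [] ∉ L)
    (hc : ∀ r ∈ L, r.IsChain fun x y => x == y) (hlen : ∀ r ∈ L, r.length ≤ 2)
    (hc' : L.IsChain fun r r' => ∃ hr hr', (r.getLast hr == r'.head hr') = false) :
    NoTripleRun L.flatten := by
  induction L with
  | nil => exact noTripleRun_nil
  | cons R L ih =>
    rw [mem_cons, not_or] at hn
    have hL := ih hn.2 (fun r hr => hc r (mem_cons_of_mem R hr))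
      (fun r hr => hlen r (mem_cons_of_mem R hr)) hc'.tail
    have hhead : L.flatten.head? ≠ some (R.getLast (Ne.symm hn.1)) := by
      match L, hc' with
      | [], _ => simp
      | R₂ :: L, hc' =>
        obtain ⟨_, hR₂, hne⟩ := (isChain_cons_cons.1 hc').1
        obtain ⟨b, R₂, rfl⟩ := exists_cons_of_ne_nil hR₂
        rw [flatten_cons, cons_append, head?_cons, ne_eq, Option.some_inj]
        exact fun h => by simp [h] at hne
    rw [flatten_cons]
    match R, hc R mem_cons_self, hlen R mem_cons_self with
    | [a], _, _ => exact noTripleRun_cons_of_head?_ne hL hhead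
    | [a, b], hab, _ =>
      obtain rfl : a = b := by simpa using hab
      exact noTripleRun_cons_cons_of_head?_ne hL hhead

theorem noTripleRun_iff_forall_mem_splitBy {l : List α} :
    NoTripleRun l ↔ ∀ r ∈ l.splitBy (· == ·), r.length ≤ 2 := by
  constructor
  · intro h r hr
    by_contra! hr3
    obtain ⟨x, y, z, w, rfl⟩ : ∃ x y z w, r = x :: y :: z :: w := by
      match r, hr3 with
      | x :: y :: z :: w, _ => exact ⟨x, y, z, w, rfl⟩
    have hch := isChain_of_mem_splitBy hr
    obtain ⟨rfl, rfl⟩ : x = y ∧ y = z := by simp_all [isChain_cons_cons]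
    refine h x (IsInfix.trans ?_ (flatten_splitBy (· == ·) l ▸ infix_of_mem_flatten hr))
    exact (prefix_append [x, x, x] w).isInfix
  · intro h
    rw [← flatten_splitBy (· == ·) l]
    exact noTripleRun_flatten (nil_notMem_splitBy _ l) (fun _ => isChain_of_mem_splitBy) h
      (isChain_getLast_head_splitBy _ l)

end NoTripleRun

theorem not_cons_cons_sublist_of_cons_cons_sublist {a : Bool} {v d : List Bool}
    (hd : NoTripleRun (a :: d)) (h : a :: a :: v <+ d) : (!a) :: a :: v <+ d := by
  have hpre := (noTripleRun_cons_iff.1 hd).2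
  match d with
  | [] => simp at h
  | b :: d =>
    by_cases hb : a = b
    · subst hb
      match d, cons_sublist_cons.1 h with
      | [], h => simp at h
      | e :: d, h =>
        obtain rfl : e = !a := Bool.eq_not_iff.2 fun he => hpre (by simp [he])
        exact ((h.of_cons_of_ne (by simp)).cons_cons _).cons _
    · obtain rfl : b = !a := Bool.eq_not_iff.2 (Ne.symm hb)
      exact ((sublist_cons_self a _).trans (h.of_cons_of_ne hb)).cons_cons _

theorem cons_not_cons_cons_sublist {a : Bool} {v d : List Bool} (hd : NoTripleRun d)
    (h : a :: a :: a :: v <+ d) : a :: (!a) :: a :: v <+ d := by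
  induction d with
  | nil => simp at h
  | cons b d ih =>
    rcases sublist_cons_iff.1 h with h | ⟨r, hr, h⟩
    · exact (ih (hd.of_infix (suffix_cons b d).isInfix) h).cons b
    · obtain ⟨rfl, rfl⟩ := cons_eq_cons.1 hr
      exact (not_cons_cons_sublist_of_cons_cons_sublist hd h).cons_cons a

theorem append_cons_not_cons_cons_sublist {a : Bool} {u v d : List Bool} (hd : NoTripleRun d)
    (h : u ++ a :: a :: a :: v <+ d) : u ++ a :: (!a) :: a :: v <+ d := by
  obtain ⟨d₁, d₂, rfl, hu, hv⟩ := append_sublist_iff.1 h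
  exact hu.append (cons_not_cons_cons_sublist (hd.of_infix (suffix_append d₁ d₂).isInfix) hv)

def eqPairCount {α : Type*} [DecidableEq α] : List α → ℕ
  | a :: b :: l => (if a = b then 1 else 0) + eqPairCount (b :: l)
  | _ => 0

theorem eqPairCount_flip (a : Bool) (u v : List Bool) :
    eqPairCount (u ++ a :: (!a) :: a :: v) + 2 = eqPairCount (u ++ a :: a :: a :: v) := by
  induction u with
  | nil => cases a <;> simp [eqPairCount] <;> omega
  | cons x u ih =>
    cases u with
    | nil => cases a <;> cases x <;> simp_all [eqPairCount] <;> omega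
    | cons y u => simp only [cons_append, eqPairCount] at ih ⊢; omega

theorem exists_noTripleRun_forall_sublist (s : List Bool) :
    ∃ t, NoTripleRun t ∧ t.length = s.length ∧ t.head? = s.head? ∧ t.getLast? = s.getLast? ∧
      ∀ d, NoTripleRun d → s <+ d → t <+ d := by
  induction h : eqPairCount s using Nat.strong_induction_on generalizing s with
  | _ n ih =>
    by_cases hs : NoTripleRun s
    · exact ⟨s, hs, rfl, rfl, rfl, fun _ _ => id⟩
    obtain ⟨u, a, v, rfl⟩ := exists_eq_append_triple_of_not_noTripleRun hs
    obtain ⟨t, ht, hlen, hhead, hlast, hsub⟩ :=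
      ih _ (by rw [← h, ← eqPairCount_flip]; omega) (u ++ a :: (!a) :: a :: v) rfl
    refine ⟨t, ht, by simp [hlen], ?_, ?_,
      fun d hd hsd => hsub d hd (append_cons_not_cons_cons_sublist hd hsd)⟩
    · cases u <;> simp [hhead]
    · simp [hlast, getLast?_append]

section LongestCommonSubsequence

variable {α : Type*}

theorem cons_sublist_of_head?_ne {a : α} {s c : List α} (hc : c.head? = some a) (hs : s <+ c)
    (hsa : s.head? ≠ some a) : a :: s <+ c := by
  obtain ⟨c, rfl⟩ : ∃ c', c = a :: c' := by cases c <;> simp_all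
  rcases sublist_cons_iff.1 hs with hs | ⟨r, rfl, _⟩
  · exact hs.cons_cons a
  · simp at hsa

theorem head?_eq_of_forall_common_sublist_length_le {a : α} {s c c' : List α}
    (hc : c.head? = some a) (hc' : c'.head? = some a) (hsc : s <+ c) (hsc' : s <+ c')
    (hmax : ∀ u, u <+ c → u <+ c' → u.length ≤ s.length) : s.head? = some a := by
  by_contra hsa
  simpa using hmax _ (cons_sublist_of_head?_ne hc hsc hsa) (cons_sublist_of_head?_ne hc' hsc' hsa)

theorem getLast?_eq_of_forall_common_sublist_length_le {a : α} {s c c' : List α}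
    (hc : c.getLast? = some a) (hc' : c'.getLast? = some a) (hsc : s <+ c) (hsc' : s <+ c')
    (hmax : ∀ u, u <+ c → u <+ c' → u.length ≤ s.length) : s.getLast? = some a := by
  rw [← head?_reverse] at hc hc' ⊢
  refine head?_eq_of_forall_common_sublist_length_le hc hc' (reverse_sublist.2 hsc)
    (reverse_sublist.2 hsc') fun u hu hu' => ?_
  simpa using hmax u.reverse (reverse_sublist.1 (by simpa using hu))
    (reverse_sublist.1 (by simpa using hu'))

end LongestCommonSubsequence

theorem inS_iff {s : List Bool} :
    InS s ↔ s.head? = some true ∧ s.getLast? = some true ∧ NoTripleRun s := by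
  rw [InS, noTripleRun_iff_forall_mem_splitBy]
  refine and_congr_right' (and_congr_right' (forall₂_congr fun r hr => ?_))
  have := length_pos_iff.2 (ne_nil_of_mem_splitBy hr)
  omega

theorem lcs_can_be_taken_in_S_general (c c' : List Bool)
    (hc : InS c) (hc' : InS c')
    (s : List Bool) (hsc : List.Sublist s c) (hsc' : List.Sublist s c')
    (hmax : ∀ u : List Bool, List.Sublist u c → List.Sublist u c' → u.length ≤ s.length) :
    ∃ ssub : List Bool, InS ssub ∧ ssub.length = s.length ∧
      List.Sublist ssub c ∧ List.Sublist ssub c' := by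
  rw [inS_iff] at hc hc'
  obtain ⟨t, ht, hlen, hhead, hlast, hsub⟩ := exists_noTripleRun_forall_sublist s
  refine ⟨t, inS_iff.2 ⟨?_, ?_, ht⟩, hlen, hsub c hc.2.2 hsc, hsub c' hc'.2.2 hsc'⟩
  · rw [hhead]
    exact head?_eq_of_forall_common_sublist_length_le hc.1 hc'.1 hsc hsc' hmax
  · rw [hlast]
    exact getLast?_eq_of_forall_common_sublist_length_le hc.2.1 hc'.2.1 hsc hsc' hmax

/-- If `c, c'` are length-`m` strings in `S` (start and end with `1`, only 1-runs and
2-runs) and `s` is a longest common subsequence of `c` and `c'`, then there is a common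
subsequence `s_sub ∈ S` of `c` and `c'` with `|s_sub| = |s|`. -/
theorem lcs_can_be_taken_in_S (m : ℕ) (c c' : List Bool)
    (hcl : c.length = m) (hc : InS c) (hc'l : c'.length = m) (hc' : InS c')
    (s : List Bool) (hsc : List.Sublist s c) (hsc' : List.Sublist s c')
    (hmax : ∀ u : List Bool, List.Sublist u c → List.Sublist u c' → u.length ≤ s.length) :
    ∃ ssub : List Bool, InS ssub ∧ ssub.length = s.length ∧
      List.Sublist ssub c ∧ List.Sublist ssub c' :=
  lcs_can_be_taken_in_S_general c c' hc hc' s hsc hsc' hmax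
end

section
/- Let T ≥ M₁ + q where q ≥ 1-p, p ∈ (0,1), T an integer, and let Z ~ Binomial(⌈M₁/(1-p)⌉, 1-p). Then Pr[Z ≥ T+1] ≤ 1 - e^{-M₁-q} Σ_{i=0}^{T} (M₁+q)^i / i!. Moreover the right-hand side is monotonically increasing in q. -/
/-!
Write `B_n(x) = P[Bin(n, x) ≤ T]` and `P(λ) = P[Poi(λ) ≤ T]`. The tail on the left is
`1 - B_n(1 - p)` for `n = ⌈M₁/(1-p)⌉`, and `n(1 - p) ≤ M₁ + q ≤ T`. By Anderson's theorem
`n ↦ B_n(T/n)` decreases for `n > T`, so the Poisson limit gives `P(T) ≤ B_n(T/n)`. The difference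
`B_n(λ/n) - P(λ)` vanishes at `λ = 0` and its derivative changes sign at most once, from `+` to `-`,
so it is nonnegative on `[0, T]`. Hence `P(n(1 - p)) ≤ B_n(1 - p)`, and `P` decreases in `λ`.
-/

open Finset Real Filter Topology

noncomputable def poissonCDF (T : ℕ) (l : ℝ) : ℝ :=
  exp (-l) * ∑ i ∈ range (T + 1), l ^ i / i.factorial

noncomputable def binomialCDF (n T : ℕ) (x : ℝ) : ℝ :=
  ∑ k ∈ range (T + 1), n.choose k * x ^ k * (1 - x) ^ (n - k)

theorem exp_two_mul_sub_one_le {y : ℝ} (hy0 : 0 ≤ y) (hy1 : y < 1) :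
    exp (2 * y) - 1 ≤ 2 * y / (1 - y) := by
  have hs := hasSum_log_sub_log_of_abs_lt_one (abs_lt.2 ⟨by linarith, hy1⟩)
  have hlog : 2 * y ≤ log (1 + y) - log (1 - y) := by
    simpa using le_hasSum hs 0 fun k _ => by positivity
  have hexp : exp (2 * y) ≤ (1 + y) / (1 - y) := by
    rw [← exp_log (by apply div_pos <;> linarith : 0 < (1 + y) / (1 - y)),
      log_div (by linarith) (by linarith)]
    exact exp_le_exp.2 hlog
  have : 1 - y ≠ 0 := by linarith
  calc exp (2 * y) - 1 ≤ (1 + y) / (1 - y) - 1 := by linarith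
    _ = 2 * y / (1 - y) := by field_simp; ring

theorem pow_le_exp_mul_sub_one {x : ℝ} (hx : 0 ≤ x) (k : ℕ) : x ^ k ≤ exp (k * (x - 1)) := by
  rw [exp_nat_mul]
  exact pow_le_pow_left₀ hx (by linarith [add_one_le_exp (x - 1)]) k

theorem pow_mul_one_sub_pow_le {p t : ℝ} (hp0 : 0 < p) (hp1 : p < 1) (ht0 : 0 ≤ t) (ht1 : t ≤ 1)
    (a b : ℕ) :
    t ^ a * (1 - t) ^ b ≤ p ^ a * (1 - p) ^ b * exp ((a / p - b / (1 - p)) * (t - p)) := by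
  have hq : 0 < 1 - p := by linarith
  have ha := pow_le_exp_mul_sub_one (div_nonneg ht0 hp0.le) a
  have hb := pow_le_exp_mul_sub_one (div_nonneg (by linarith) hq.le : 0 ≤ (1 - t) / (1 - p)) b
  calc t ^ a * (1 - t) ^ b = p ^ a * (1 - p) ^ b * ((t / p) ^ a * ((1 - t) / (1 - p)) ^ b) := by
        rw [div_pow, div_pow]; field_simp
    _ ≤ p ^ a * (1 - p) ^ b * (exp (a * (t / p - 1)) * exp (b * ((1 - t) / (1 - p) - 1))) := by
        gcongr
    _ = p ^ a * (1 - p) ^ b * exp ((a / p - b / (1 - p)) * (t - p)) := by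
        rw [← exp_add]; congr 2; field_simp; ring

theorem exp_mul_one_sub_div_pow_monotoneOn {n : ℝ} (hn : 0 < n) (m : ℕ) :
    MonotoneOn (fun l => exp l * (1 - l / n) ^ m) (Set.Iic (n - m)) := by
  intro z _ y hy hzy
  rcases Nat.eq_zero_or_pos m with rfl | hm
  · simpa using exp_le_exp.2 hzy
  have hm1 : (1 : ℝ) ≤ m := by exact_mod_cast hm
  have hyn : 0 < n - y := by linarith [hy.out]
  have hratio : (1 - z / n) ^ m = (1 - y / n) ^ m * ((n - z) / (n - y)) ^ m := by
    rw [← mul_pow]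
    congr 1
    field_simp
  have hexp : ((n - z) / (n - y)) ^ m ≤ exp (y - z) := by
    refine (pow_le_exp_mul_sub_one (div_nonneg (by linarith) hyn.le) m).trans (exp_le_exp.2 ?_)
    rw [div_sub_one hyn.ne', mul_div_assoc', div_le_iff₀ hyn]
    nlinarith [hy.out]
  have hy1 : 0 ≤ 1 - y / n := by rw [sub_nonneg, div_le_one hn]; linarith
  calc exp z * (1 - z / n) ^ m = exp z * (1 - y / n) ^ m * ((n - z) / (n - y)) ^ m := by
        rw [hratio, mul_assoc]
    _ ≤ exp z * (1 - y / n) ^ m * exp (y - z) := by gcongr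
    _ = exp y * (1 - y / n) ^ m := by rw [mul_right_comm, ← exp_add, add_sub_cancel]

theorem sub_le_of_neg_deriv_le_exp {g g' : ℝ → ℝ} {a b C μ : ℝ} (hab : a ≤ b) (hμ : μ ≠ 0)
    (hg : ∀ t, HasDerivAt g (g' t) t) (hbound : ∀ t ∈ Set.Ico a b, -g' t ≤ C * exp (μ * (t - a))) :
    g a - g b ≤ C / μ * (exp (μ * (b - a)) - 1) := by
  have hB : ∀ t, HasDerivAt (fun t => -g a + C / μ * (exp (μ * (t - a)) - 1))
      (C * exp (μ * (t - a))) t := fun t => by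
    have := ((((hasDerivAt_id t).sub_const a).const_mul μ).exp.sub_const 1).const_mul (C / μ)
    exact (this.const_add (-g a)).congr_deriv (by field_simp; simp)
  have := image_le_of_deriv_right_le_deriv_boundary (f := fun t => -g t)
    (fun t _ => (hg t).neg.continuousAt.continuousWithinAt)
    (fun t _ => (hg t).neg.hasDerivWithinAt) (by simp)
    (fun t _ => (hB t).continuousAt.continuousWithinAt) (fun t _ => (hB t).hasDerivWithinAt)
    hbound (Set.right_mem_Icc.2 hab)
  linarith

theorem min_le_of_deriv_pos_imp_nonneg {g : ℝ → ℝ} {a b x : ℝ} (hg : Differentiable ℝ g)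
    (H : ∀ z ∈ Set.Ioo a b, ∀ y ∈ Set.Ioo a b, z ≤ y → 0 < deriv g y → 0 ≤ deriv g z)
    (hx : x ∈ Set.Icc a b) : min (g a) (g b) ≤ g x := by
  by_cases hpos : ∃ y ∈ Set.Ioo x b, 0 < deriv g y
  · obtain ⟨y, hy, hdy⟩ := hpos
    have hmono : MonotoneOn g (Set.Icc a x) :=
      monotoneOn_of_deriv_nonneg (convex_Icc a x) hg.continuous.continuousOn
        hg.differentiableOn fun z hz => by
          rw [interior_Icc] at hz
          exact H z ⟨hz.1, hz.2.trans_le hx.2⟩ y ⟨hx.1.trans_lt hy.1, hy.2⟩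
            (hz.2.le.trans hy.1.le) hdy
    exact (min_le_left _ _).trans (hmono (Set.left_mem_Icc.2 hx.1) (Set.right_mem_Icc.2 hx.1) hx.1)
  · simp only [not_exists, not_and, not_lt] at hpos
    have hanti : AntitoneOn g (Set.Icc x b) :=
      antitoneOn_of_deriv_nonpos (convex_Icc x b) hg.continuous.continuousOn
        hg.differentiableOn fun z hz => by
          rw [interior_Icc] at hz
          exact hpos z hz
    exact (min_le_right _ _).trans (hanti (Set.left_mem_Icc.2 hx.2) (Set.right_mem_Icc.2 hx.2) hx.2)

theorem hasDerivAt_poissonCDF (T : ℕ) (l : ℝ) :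
    HasDerivAt (poissonCDF T) (-(exp (-l) * l ^ T / T.factorial)) l := by
  induction T with
  | zero =>
    have h : poissonCDF 0 = fun l => exp (-l) := funext fun l => by simp [poissonCDF]
    simpa [h] using (hasDerivAt_neg l).exp
  | succ T ih =>
    have hsplit : poissonCDF (T + 1) =
        fun l => poissonCDF T l + exp (-l) * (l ^ (T + 1) / (T + 1).factorial) :=
      funext fun l => by rw [poissonCDF, sum_range_succ, mul_add, poissonCDF]
    rw [hsplit]
    refine (ih.fun_add ((hasDerivAt_neg l).exp.fun_mul
      ((hasDerivAt_pow (T + 1) l).div_const _))).congr_deriv ?_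
    rw [Nat.factorial_succ]
    push_cast
    field_simp
    ring

theorem poissonCDF_zero (T : ℕ) : poissonCDF T 0 = 1 := by
  simp [poissonCDF, sum_range_succ']

theorem poissonCDF_antitoneOn (T : ℕ) : AntitoneOn (poissonCDF T) (Set.Ici 0) := by
  refine antitoneOn_of_hasDerivWithinAt_nonpos (convex_Ici 0)
    (fun l _ => (hasDerivAt_poissonCDF T l).continuousAt.continuousWithinAt)
    (fun l _ => (hasDerivAt_poissonCDF T l).hasDerivWithinAt) fun l hl => ?_
  rw [interior_Ici] at hl
  have : 0 ≤ exp (-l) * l ^ T / T.factorial := by have := hl.out.le; positivity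
  linarith

theorem poissonCDF_le_one {T : ℕ} {l : ℝ} (hl : 0 ≤ l) : poissonCDF T l ≤ 1 :=
  poissonCDF_zero T ▸ poissonCDF_antitoneOn T Set.self_mem_Ici hl hl

theorem binomialCDF_eq_eval (n T : ℕ) (x : ℝ) :
    binomialCDF n T x = (∑ k ∈ range (T + 1), bernsteinPolynomial ℝ n k).eval x := by
  simp [binomialCDF, Polynomial.eval_finsetSum, bernsteinPolynomial]

theorem derivative_sum_bernsteinPolynomial (R : Type*) [CommRing R] (n T : ℕ) :
    Polynomial.derivative (∑ k ∈ range (T + 1), bernsteinPolynomial R (n + 1) k) =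
      -(n + 1) * bernsteinPolynomial R n T := by
  induction T with
  | zero => simp [bernsteinPolynomial.derivative_zero]
  | succ T ih =>
    rw [sum_range_succ, Polynomial.derivative_add, ih, bernsteinPolynomial.derivative_succ]
    push_cast
    ring

theorem hasDerivAt_binomialCDF (n T : ℕ) (x : ℝ) :
    HasDerivAt (binomialCDF (n + 1) T)
      (-((n + 1) * (n.choose T * x ^ T * (1 - x) ^ (n - T)))) x := by
  have h := (∑ k ∈ range (T + 1), bernsteinPolynomial ℝ (n + 1) k).hasDerivAt x
  rw [derivative_sum_bernsteinPolynomial ℝ] at h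
  rw [show binomialCDF (n + 1) T = _ from funext (binomialCDF_eq_eval (n + 1) T)]
  exact h.congr_deriv (by simp [bernsteinPolynomial]; ring)

theorem binomialCDF_zero (n T : ℕ) : binomialCDF n T 0 = 1 := by
  simp [binomialCDF, sum_range_succ']

theorem binomialCDF_succ (n T : ℕ) (x : ℝ) :
    binomialCDF (n + 1) T x = binomialCDF n T x - n.choose T * x ^ (T + 1) * (1 - x) ^ (n - T) := by
  induction T with
  | zero => simp [binomialCDF, pow_succ]; ring
  | succ T ih =>
    simp only [binomialCDF, sum_range_succ _ (T + 1)] at ih ⊢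
    rw [ih, Nat.choose_succ_succ', Nat.add_sub_add_right]
    rcases lt_or_ge T n with hTn | hnT
    · obtain ⟨m, rfl⟩ := Nat.exists_eq_add_of_lt hTn
      rw [show T + m + 1 - T = m + 1 by omega, show T + m + 1 - (T + 1) = m by omega]
      push_cast
      ring
    · rw [Nat.choose_eq_zero_of_lt (by omega : n < T + 1)]
      simp

theorem binomialCDF_add_sum_Icc (n T : ℕ) (x : ℝ) :
    binomialCDF n T x + ∑ k ∈ Icc (T + 1) n, n.choose k * x ^ k * (1 - x) ^ (n - k) = 1 := by
  have htotal : ∑ k ∈ range (n + 1), n.choose k * x ^ k * (1 - x) ^ (n - k) = 1 := by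
    calc _ = (x + (1 - x)) ^ n := by rw [add_pow]; exact sum_congr rfl fun k _ => by ring
      _ = 1 := by simp
  rcases le_or_gt n T with hnT | hTn
  · rw [Icc_eq_empty (by omega), sum_empty, add_zero, binomialCDF]
    refine (sum_subset (range_subset_range.2 (by omega)) fun k _ hkn => ?_).symm.trans htotal
    rw [Nat.choose_eq_zero_of_lt (by simpa using hkn), Nat.cast_zero, zero_mul, zero_mul]
  · rw [binomialCDF, ← Ico_add_one_right_eq_Icc, sum_range_add_sum_Ico _ (by omega), htotal]

theorem tendsto_binomialCDF_div (T : ℕ) (l : ℝ) :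
    Tendsto (fun n : ℕ => binomialCDF n T (l / n)) atTop (𝓝 (poissonCDF T l)) := by
  have hl : Tendsto (fun n : ℕ => n * (l / n)) atTop (𝓝 l) :=
    tendsto_const_nhds.congr' <| (eventually_ne_atTop 0).mono fun n hn => by field_simp
  simp only [poissonCDF, mul_sum, ← mul_div_assoc]
  exact tendsto_finsetSum _ fun k _ =>
    ProbabilityTheory.tendsto_choose_mul_pow_of_tendsto_mul_atTop k hl

theorem binomialCDF_sub_binomialCDF_le {N T : ℕ} {p p' μ : ℝ} (hp0 : 0 < p) (hp1 : p < 1)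
    (hpp' : p ≤ p') (hp'1 : p' ≤ 1) (hμ : T / p - ((N - T : ℕ) : ℝ) / (1 - p) = μ) (hμ0 : μ ≠ 0) :
    binomialCDF (N + 1) T p - binomialCDF (N + 1) T p' ≤
      (N + 1) * N.choose T * p ^ T * (1 - p) ^ (N - T) / μ * (exp (μ * (p' - p)) - 1) := by
  refine sub_le_of_neg_deriv_le_exp hpp' hμ0 (hasDerivAt_binomialCDF N T) fun t ht => ?_
  have hpt := pow_mul_one_sub_pow_le hp0 hp1 (hp0.le.trans ht.1) (ht.2.le.trans hp'1) T (N - T)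
  rw [hμ] at hpt
  calc -(-((N + 1) * (N.choose T * t ^ T * (1 - t) ^ (N - T))))
      = ((N : ℝ) + 1) * N.choose T * (t ^ T * (1 - t) ^ (N - T)) := by ring
    _ ≤ ((N : ℝ) + 1) * N.choose T * (p ^ T * (1 - p) ^ (N - T) * exp (μ * (t - p))) := by
      gcongr
    _ = _ := by ring

-- The density `t ^ T * (1 - t) ^ m` is log-concave, so on `[p, p']` it is at most the exponential of
-- its log-tangent at `p`, of slope `μ`. Integrating and using `exp (2 y) - 1 ≤ 2 y / (1 - y)` with
-- `μ (p' - p) = 2 y` gives a bound that is exactly the right-hand side.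
theorem binomialCDF_div_sub_binomialCDF_div_le {m T : ℕ} (hT0 : 0 < T) :
    binomialCDF (T + m + 1) T (T / (T + m + 2)) - binomialCDF (T + m + 1) T (T / (T + m + 1)) ≤
      (T + m + 1).choose T * (T / (T + m + 2)) ^ (T + 1) * (1 - T / (T + m + 2)) ^ (m + 1) := by
  have hT1 : (1 : ℝ) ≤ T := by exact_mod_cast hT0
  set p : ℝ := T / (T + m + 2) with hp
  set p' : ℝ := T / (T + m + 1) with hp'
  set μ : ℝ := 2 * (T + m + 2) / (m + 2) with hμ
  set y : ℝ := T / ((T + m + 1) * (m + 2)) with hy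
  have h1p : 1 - p = (m + 2) / (T + m + 2) := by rw [hp]; field_simp; ring
  have hp1 : p < 1 := by rw [hp, div_lt_one (by positivity)]; linarith
  have hpp' : p ≤ p' := div_le_div_of_nonneg_left (by positivity) (by positivity) (by linarith)
  have hp'1 : p' ≤ 1 := by rw [hp', div_le_one (by positivity)]; linarith
  have hμ_eq : T / p - ((T + m - T : ℕ) : ℝ) / (1 - p) = μ := by
    rw [Nat.add_sub_cancel_left, h1p, hp, hμ]
    field_simp
    ring
  have h1y : 1 - y = (T + m + 2) * (m + 1) / ((T + m + 1) * (m + 2)) := by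
    rw [hy]; field_simp; ring
  have hy1 : y < 1 := by linarith [show 0 < 1 - y by rw [h1y]; positivity]
  have hdiff := binomialCDF_sub_binomialCDF_le (by positivity) hp1 hpp' hp'1 hμ_eq
    (by positivity)
  rw [Nat.add_sub_cancel_left] at hdiff
  push_cast at hdiff
  have hexp : exp (μ * (p' - p)) - 1 ≤ 2 * y / (1 - y) := by
    rw [show μ * (p' - p) = 2 * y by rw [hμ, hp, hp', hy]; field_simp; ring]
    exact exp_two_mul_sub_one_le (by positivity) hy1
  have hchoose : ((T + m).choose T : ℝ) * (T + m + 1) = (T + m + 1).choose T * (m + 1) := by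
    have h := congrArg (Nat.cast : ℕ → ℝ) (Nat.choose_mul_succ_eq (T + m) T)
    rw [show T + m + 1 - T = m + 1 by omega] at h
    push_cast at h
    exact h
  have hscalar : (m + 1) / μ * (2 * y / (1 - y)) = p * (1 - p) := by
    rw [h1y, h1p, hμ, hy, hp]
    field_simp
  have hkey : (T + m + 1) * (T + m).choose T * p ^ T * (1 - p) ^ m / μ * (2 * y / (1 - y))
      = (T + m + 1).choose T * p ^ (T + 1) * (1 - p) ^ (m + 1) := by
    calc _ = (T + m).choose T * (T + m + 1) * (p ^ T * (1 - p) ^ m) * (2 * y / (1 - y) / μ) := by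
          ring
      _ = (T + m + 1).choose T * (p ^ T * (1 - p) ^ m) * ((m + 1) / μ * (2 * y / (1 - y))) := by
          rw [hchoose]; ring
      _ = _ := by rw [hscalar]; ring
  have hc0 : 0 ≤ (T + m + 1 : ℝ) * (T + m).choose T * p ^ T * (1 - p) ^ m / μ := by
    have : 0 ≤ 1 - p := by linarith
    positivity
  linarith [hkey ▸ mul_le_mul_of_nonneg_left hexp hc0]

theorem binomialCDF_succ_div_le {n T : ℕ} (hT : T < n) :
    binomialCDF (n + 1) T (T / (n + 1 : ℕ)) ≤ binomialCDF n T (T / n) := by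
  rcases Nat.eq_zero_or_pos T with rfl | hT0
  · simp [binomialCDF_zero]
  obtain ⟨m, rfl⟩ : ∃ m, n = T + m + 1 := ⟨n - T - 1, by omega⟩
  have h := binomialCDF_div_sub_binomialCDF_div_le (m := m) hT0
  rw [binomialCDF_succ, show T + m + 1 - T = m + 1 by omega]
  push_cast
  rw [show (T : ℝ) + m + 1 + 1 = T + m + 2 by ring]
  linarith

theorem binomialCDF_div_le_of_le {n m T : ℕ} (hT : T < n) (hnm : n ≤ m) :
    binomialCDF m T (T / m) ≤ binomialCDF n T (T / n) := by
  induction m, hnm using Nat.le_induction with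
  | base => exact le_rfl
  | succ m hnm ih => exact (binomialCDF_succ_div_le (hT.trans_le hnm)).trans ih

theorem poissonCDF_self_le_binomialCDF {n T : ℕ} (hT : T < n) :
    poissonCDF T T ≤ binomialCDF n T (T / n) :=
  le_of_tendsto (tendsto_binomialCDF_div T T)
    ((eventually_ge_atTop n).mono fun _ hm => binomialCDF_div_le_of_le hT hm)

theorem poissonCDF_le_binomialCDF {n T : ℕ} {x : ℝ} (hx : 0 ≤ x) (hnx : n * x ≤ T) :
    poissonCDF T (n * x) ≤ binomialCDF n T x := by
  rcases le_or_gt n T with hnT | hTn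
  · have h := binomialCDF_add_sum_Icc n T x
    rw [Icc_eq_empty (by omega), sum_empty, add_zero] at h
    exact h ▸ poissonCDF_le_one (by positivity)
  obtain ⟨N, rfl⟩ : ∃ N, n = N + 1 := ⟨n - 1, by omega⟩
  have hN : (0 : ℝ) < N + 1 := by positivity
  set c : ℝ := N.choose T / (N + 1) ^ T
  set ψ : ℝ → ℝ := fun l => exp l * (1 - l / (N + 1)) ^ (N - T)
  set g : ℝ → ℝ := fun l => binomialCDF (N + 1) T (l / (N + 1)) - poissonCDF T l with hg
  have hg' : ∀ l, HasDerivAt g (l ^ T * exp (-l) * (1 / T.factorial - c * ψ l)) l := fun l => by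
    refine (((hasDerivAt_binomialCDF N T (l / (N + 1))).comp l
      ((hasDerivAt_id l).div_const _)).sub (hasDerivAt_poissonCDF T l)).congr_deriv ?_
    simp only [c, ψ, div_pow, exp_neg]
    field_simp
    ring
  have hψ : MonotoneOn ψ (Set.Iic (N + 1 - (N - T : ℕ))) :=
    exp_mul_one_sub_div_pow_monotoneOn hN (N - T)
  have hT_le : (T : ℝ) ≤ N + 1 - (N - T : ℕ) := by
    rw [Nat.cast_sub (by omega)]; linarith
  have hsign : ∀ z ∈ Set.Ioo (0 : ℝ) T, ∀ y ∈ Set.Ioo (0 : ℝ) T, z ≤ y →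
      0 < deriv g y → 0 ≤ deriv g z := by
    intro z hz y hy hzy hdy
    rw [(hg' y).deriv] at hdy
    rw [(hg' z).deriv]
    have hψzy : ψ z ≤ ψ y := hψ (hz.2.le.trans hT_le) (hy.2.le.trans hT_le) hzy
    have hy0 : 0 < y ^ T * exp (-y) := by have := hy.1; positivity
    have hz0 : 0 ≤ z ^ T * exp (-z) := by have := hz.1; positivity
    have : 0 < 1 / T.factorial - c * ψ y := pos_of_mul_pos_right hdy hy0.le
    have : c * ψ z ≤ c * ψ y := mul_le_mul_of_nonneg_left hψzy (by positivity)
    exact mul_nonneg hz0 (by linarith)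
  have hmin := min_le_of_deriv_pos_imp_nonneg (fun l => (hg' l).differentiableAt) hsign
    ⟨by positivity, hnx⟩
  have hg0 : g 0 = 0 := by simp [hg, binomialCDF_zero, poissonCDF_zero]
  have hgT : 0 ≤ g T := sub_nonneg.2 (by exact_mod_cast poissonCDF_self_le_binomialCDF hTn)
  have hgx : 0 ≤ g ((N + 1 : ℕ) * x) := (le_min hg0.ge hgT).trans hmin
  simpa [hg, mul_div_cancel_left₀ x hN.ne'] using hgx

theorem binomial_upper_tail_le_general (p q M1 : ℝ) (T : ℕ) (hp1 : p < 1)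
    (hM1 : 0 < M1) (hq : 1 - p ≤ q) (hT : M1 + q ≤ (T : ℝ)) :
    (∑ k ∈ Finset.Icc (T + 1) ⌈M1 / (1 - p)⌉₊,
        ((⌈M1 / (1 - p)⌉₊).choose k : ℝ) * (1 - p) ^ k * p ^ (⌈M1 / (1 - p)⌉₊ - k)) ≤
      1 - Real.exp (-M1 - q) * ∑ i ∈ Finset.range (T + 1), (M1 + q) ^ i / (i.factorial : ℝ) ∧
    ∀ q' q'' : ℝ, 1 - p ≤ q' → q' ≤ q'' →
      1 - Real.exp (-M1 - q') * ∑ i ∈ Finset.range (T + 1), (M1 + q') ^ i / (i.factorial : ℝ) ≤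
      1 - Real.exp (-M1 - q'') * ∑ i ∈ Finset.range (T + 1), (M1 + q'') ^ i / (i.factorial : ℝ) := by
  have hpoisson : ∀ r, exp (-M1 - r) * ∑ i ∈ range (T + 1), (M1 + r) ^ i / (i.factorial : ℝ) =
      poissonCDF T (M1 + r) := fun r => by rw [poissonCDF, neg_add']
  simp only [hpoisson]
  have hp : 0 < 1 - p := by linarith
  refine ⟨?_, fun q' q'' hq' hq'' => ?_⟩
  · set n := ⌈M1 / (1 - p)⌉₊
    have hnx : n * (1 - p) ≤ M1 + q :=
      calc n * (1 - p) ≤ (M1 / (1 - p) + 1) * (1 - p) := by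
            gcongr; exact (Nat.ceil_lt_add_one (div_pos hM1 hp).le).le
        _ = M1 + (1 - p) := by field_simp
        _ ≤ M1 + q := by linarith
    have htail := binomialCDF_add_sum_Icc n T (1 - p)
    rw [sub_sub_cancel] at htail
    calc _ = 1 - binomialCDF n T (1 - p) := by linarith
      _ ≤ 1 - poissonCDF T (n * (1 - p)) := by
          gcongr; exact poissonCDF_le_binomialCDF hp.le (hnx.trans hT)
      _ ≤ 1 - poissonCDF T (M1 + q) := by
          gcongr; exact poissonCDF_antitoneOn T (by positivity : (0:ℝ) ≤ n * (1 - p))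
            (by linarith : (0:ℝ) ≤ M1 + q) hnx
  · linarith [poissonCDF_antitoneOn T (by linarith : (0:ℝ) ≤ M1 + q') (by linarith : (0:ℝ) ≤ M1 + q'')
      (by linarith : M1 + q' ≤ M1 + q'')]

/-- For `Z ~ Binomial(⌈M₁/(1-p)⌉, 1-p)`, `q ≥ 1-p` and an integer `T ≥ M₁ + q`,
`Pr[Z ≥ T+1] ≤ 1 - e^{-M₁-q} Σ_{i=0}^{T} (M₁+q)^i/i!`; moreover the right-hand side is
monotonically increasing in `q`. -/
theorem binomial_upper_tail_le (p q M1 : ℝ) (T : ℕ) (hp : 0 < p) (hp1 : p < 1)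
    (hM1 : 0 < M1) (hq : 1 - p ≤ q) (hT : M1 + q ≤ (T : ℝ)) :
    (∑ k ∈ Finset.Icc (T + 1) ⌈M1 / (1 - p)⌉₊,
        ((⌈M1 / (1 - p)⌉₊).choose k : ℝ) * (1 - p) ^ k * p ^ (⌈M1 / (1 - p)⌉₊ - k)) ≤
      1 - Real.exp (-M1 - q) * ∑ i ∈ Finset.range (T + 1), (M1 + q) ^ i / (i.factorial : ℝ) ∧
    ∀ q' q'' : ℝ, 1 - p ≤ q' → q' ≤ q'' →
      1 - Real.exp (-M1 - q') * ∑ i ∈ Finset.range (T + 1), (M1 + q') ^ i / (i.factorial : ℝ) ≤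
      1 - Real.exp (-M1 - q'') * ∑ i ∈ Finset.range (T + 1), (M1 + q'') ^ i / (i.factorial : ℝ) :=
  binomial_upper_tail_le_general p q M1 T hp1 hM1 hq hT
end

section
/- Let p ∈ (0,1), M₂ ≥ 0 and T ≤ M₂ - 1 an integer, and let Z ~ Binomial(⌈M₂/(1-p)⌉, 1-p). Then Pr[Z ≤ T] ≤ e^{-M₂} Σ_{i=0}^{T} M₂^i / i!. Furthermore, for any q ≥ p such that M₂/(1-q) is an integer, Pr[Z ≤ T] ≤ Σ_{i=0}^{T} C(M₂/(1-q), i) (1-q)^i q^{M₂/(1-q) - i}. -/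
/-!
Write `F n a = Pr[Bin(n, a/n) ≤ T]`. Lowering the success probability raises a lower tail, so the
left-hand side is at most `F n M₂` for `n = ⌈M₂/(1-p)⌉`, and it remains to show that `n ↦ F n a`
increases (for `T + 1 ≤ a ≤ n`) towards its Poisson limit `Pr[Poi(a) ≤ T]`.

For the step from `n` to `n + 1`, interpolate by `Pr[Bin(n, x) + Ber(a - n x) ≤ T]`, a sum of
independent Bernoulli variables of total mean `a`. At `x = a/n` it is `F n a`; at `x = a/(n+1)` the
extra Bernoulli variable has the same parameter as the others, so it is `F (n+1) a`. Its derivative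
in `x` is `n (x - y) (b(T-1) - b(T))`, where `y = a - n x` and `b` is the probability function of
`Bin(n-1, x)`; on `[a/(n+1), a/n]` we have `x ≥ y` and `T` lies below the mode of `Bin(n-1, x)`,
so the interpolation decreases in `x`.
-/

open Polynomial Finset

noncomputable section

variable (R : Type*) [CommRing R]

/-- Evaluated at `x`, this is `Pr[Bin(n, x) < M]`. -/
def binomialLowerTail (n M : ℕ) : R[X] :=
  ∑ k ∈ range M, bernsteinPolynomial R n k

theorem binomialLowerTail_zero (n : ℕ) : binomialLowerTail R n 0 = 0 := by
  simp [binomialLowerTail]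

theorem binomialLowerTail_succ (n M : ℕ) :
    binomialLowerTail R n (M + 1) = binomialLowerTail R n M + bernsteinPolynomial R n M :=
  sum_range_succ _ _

theorem bernsteinPolynomial.succ_succ (n ν : ℕ) :
    bernsteinPolynomial R (n + 1) (ν + 1) =
      (1 - X) * bernsteinPolynomial R n (ν + 1) + X * bernsteinPolynomial R n ν := by
  simp only [bernsteinPolynomial, Nat.choose_succ_succ', Nat.cast_add, Nat.add_sub_add_right]
  rcases lt_or_ge ν n with hν | hν
  · rw [show n - ν = n - (ν + 1) + 1 by omega]
    ring
  · rw [Nat.choose_eq_zero_of_lt (by omega : n < ν + 1), Nat.sub_eq_zero_of_le hν]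
    ring

/- `M - 1` is truncated subtraction here and below: at `M = 0` both tails involved vanish, which
makes these identities hold without a case split. -/
theorem binomialLowerTail_succ_left (n M : ℕ) :
    binomialLowerTail R (n + 1) M =
      (1 - X) * binomialLowerTail R n M + X * binomialLowerTail R n (M - 1) := by
  induction M with
  | zero => simp [binomialLowerTail_zero]
  | succ M ih =>
    rw [binomialLowerTail_succ, ih, binomialLowerTail_succ]
    rcases M with _ | K
    · simp [binomialLowerTail_zero, bernsteinPolynomial, pow_succ, mul_comm]
    · rw [bernsteinPolynomial.succ_succ, Nat.add_sub_cancel, Nat.add_sub_cancel,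
        binomialLowerTail_succ]
      ring

theorem derivative_binomialLowerTail (n M : ℕ) :
    derivative (binomialLowerTail R n M) =
      n * (binomialLowerTail R (n - 1) (M - 1) - binomialLowerTail R (n - 1) M) := by
  induction M with
  | zero => simp [binomialLowerTail_zero]
  | succ M ih =>
    rw [binomialLowerTail_succ, derivative_add, ih, binomialLowerTail_succ]
    rcases M with _ | K
    · simp [binomialLowerTail_zero, bernsteinPolynomial.derivative_zero]
    · rw [bernsteinPolynomial.derivative_succ, Nat.add_sub_cancel, Nat.add_sub_cancel,
        binomialLowerTail_succ]
      ring

theorem eval_one_sub_binomialLowerTail (n M : ℕ) (p : R) :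
    (binomialLowerTail R n M).eval (1 - p) =
      ∑ k ∈ range M, (n.choose k : R) * (1 - p) ^ k * p ^ (n - k) := by
  simp [binomialLowerTail, eval_finsetSum, bernsteinPolynomial]

/-- Evaluated at `x`, this is `Pr[Bin(n, x) + Ber(a - n x) ≤ T]`. -/
def binomialLowerTailInterpolation (n T : ℕ) (a : R) : R[X] :=
  (1 - (C a - (n : R[X]) * X)) * binomialLowerTail R n (T + 1) +
    (C a - (n : R[X]) * X) * binomialLowerTail R n T

theorem derivative_binomialLowerTailInterpolation (m T : ℕ) (a : R) :
    derivative (binomialLowerTailInterpolation R (m + 1) T a) =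
      ((m : R[X]) + 1) * (X - (C a - ((m : R[X]) + 1) * X)) *
        (binomialLowerTail R m T - binomialLowerTail R m (T - 1) - bernsteinPolynomial R m T) := by
  simp only [binomialLowerTailInterpolation, derivative_mul, derivative_sub, derivative_add,
    derivative_one, derivative_C, derivative_X, derivative_natCast, derivative_binomialLowerTail,
    Nat.add_sub_cancel]
  rw [binomialLowerTail_succ_left, binomialLowerTail_succ_left, Nat.add_sub_cancel,
    binomialLowerTail_succ R m T]
  push_cast
  ring

theorem eval_binomialLowerTailInterpolation (n T : ℕ) (a x : ℝ) :
    (binomialLowerTailInterpolation ℝ n T a).eval x =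
      (1 - (a - n * x)) * (binomialLowerTail ℝ n (T + 1)).eval x +
        (a - n * x) * (binomialLowerTail ℝ n T).eval x := by
  simp [binomialLowerTailInterpolation]

theorem bernsteinPolynomial.eval_nonneg {n ν : ℕ} {x : ℝ} (hx₀ : 0 ≤ x) (hx₁ : x ≤ 1) :
    0 ≤ (bernsteinPolynomial ℝ n ν).eval x := by
  simp only [bernsteinPolynomial, eval_mul, eval_pow, eval_sub, eval_one, eval_X, eval_natCast]
  have : 0 ≤ 1 - x := by linarith
  positivity

theorem bernsteinPolynomial.eval_le_eval_succ {m k : ℕ} {x : ℝ} (hk : k < m) (hx₁ : x ≤ 1)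
    (hmode : k + 1 ≤ (m + 1) * x) :
    (bernsteinPolynomial ℝ m k).eval x ≤ (bernsteinPolynomial ℝ m (k + 1)).eval x := by
  have hx₀ : 0 ≤ x := by nlinarith
  have hchoose : ((m.choose (k + 1) : ℕ) : ℝ) * (k + 1) = m.choose k * (m - k) := by
    rw [← Nat.cast_sub hk.le]
    exact_mod_cast Nat.choose_succ_right_eq m k
  have key : ((k : ℝ) + 1) * ((bernsteinPolynomial ℝ m (k + 1)).eval x -
      (bernsteinPolynomial ℝ m k).eval x) =
      m.choose k * x ^ k * (1 - x) ^ (m - (k + 1)) * ((m + 1) * x - (k + 1)) := by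
    simp only [bernsteinPolynomial, eval_mul, eval_pow, eval_sub, eval_one, eval_X, eval_natCast]
    rw [show m - k = m - (k + 1) + 1 by omega]
    linear_combination x ^ (k + 1) * (1 - x) ^ (m - (k + 1)) * hchoose
  have h₁ : 0 ≤ 1 - x := by linarith
  have h₂ : 0 ≤ (m + 1) * x - (k + 1) := by linarith
  rw [← sub_nonneg, ← mul_nonneg_iff_of_pos_left (by positivity : (0 : ℝ) < k + 1), key]
  positivity

theorem monotone_eval_binomialLowerTail {n : ℕ} {x : ℝ} (hx₀ : 0 ≤ x) (hx₁ : x ≤ 1) :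
    Monotone fun M => (binomialLowerTail ℝ n M).eval x :=
  monotone_nat_of_le_succ fun M => by
    simpa [binomialLowerTail_succ] using bernsteinPolynomial.eval_nonneg hx₀ hx₁

theorem antitoneOn_eval_binomialLowerTail (n M : ℕ) :
    AntitoneOn (fun x => (binomialLowerTail ℝ n M).eval x) (Set.Icc 0 1) := by
  refine antitoneOn_of_deriv_nonpos (convex_Icc 0 1) (binomialLowerTail ℝ n M).continuousOn
    (binomialLowerTail ℝ n M).differentiableOn fun x hx => ?_
  rw [interior_Icc] at hx
  have hM := monotone_eval_binomialLowerTail (n := n - 1) hx.1.le hx.2.le (Nat.sub_le M 1)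
  rw [Polynomial.deriv, derivative_binomialLowerTail]
  simp only [eval_mul, eval_natCast, eval_sub]
  exact mul_nonpos_of_nonneg_of_nonpos (Nat.cast_nonneg n) (by linarith)

theorem eval_binomialLowerTail_sub_le {m T : ℕ} {x : ℝ} (hT : T ≤ m) (hx₁ : x ≤ 1)
    (hmode : T ≤ (m + 1) * x) :
    (binomialLowerTail ℝ m T).eval x - (binomialLowerTail ℝ m (T - 1)).eval x ≤
      (bernsteinPolynomial ℝ m T).eval x := by
  rcases T with _ | k
  · have hx₀ : 0 ≤ x := by nlinarith
    simpa [binomialLowerTail_zero] using bernsteinPolynomial.eval_nonneg hx₀ hx₁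
  · rw [Nat.add_sub_cancel, binomialLowerTail_succ, eval_add, add_sub_cancel_left]
    exact bernsteinPolynomial.eval_le_eval_succ (by omega) hx₁ (by exact_mod_cast hmode)

theorem antitoneOn_eval_binomialLowerTailInterpolation {m T : ℕ} {a : ℝ} (hT : T + 1 ≤ a)
    (ha : a ≤ m + 1) :
    AntitoneOn (fun x => (binomialLowerTailInterpolation ℝ (m + 1) T a).eval x)
      (Set.Icc (a / (m + 1 + 1)) (a / (m + 1))) := by
  refine antitoneOn_of_deriv_nonpos (convex_Icc _ _) (Polynomial.continuousOn _)
    (Polynomial.differentiableOn _) fun x hx => ?_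
  rw [interior_Icc, Set.mem_Ioo, div_lt_iff₀ (by positivity), lt_div_iff₀ (by positivity)] at hx
  have hTm : (T : ℝ) ≤ m := by linarith
  have hx₁ : x ≤ 1 := by nlinarith
  have hmode : (T : ℝ) ≤ (m + 1) * x := by nlinarith
  have hsign := eval_binomialLowerTail_sub_le (by exact_mod_cast hTm) hx₁ hmode
  rw [Polynomial.deriv, derivative_binomialLowerTailInterpolation]
  simp only [eval_mul, eval_add, eval_sub, eval_natCast, eval_one, eval_X, eval_C]
  refine mul_nonpos_of_nonneg_of_nonpos (mul_nonneg (by positivity) ?_) (by linarith)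
  linarith

theorem eval_binomialLowerTail_le_succ {n T : ℕ} {a : ℝ} (hT : T + 1 ≤ a) (hn : a ≤ n) :
    (binomialLowerTail ℝ n (T + 1)).eval (a / n) ≤
      (binomialLowerTail ℝ (n + 1) (T + 1)).eval (a / (n + 1)) := by
  have hn₀ : (0 : ℝ) < n := (by positivity : (0 : ℝ) < T + 1).trans_le (hT.trans hn)
  obtain ⟨m, rfl⟩ := Nat.exists_eq_succ_of_ne_zero (by exact_mod_cast hn₀.ne' : n ≠ 0)
  push_cast at hn ⊢
  have hc : a / (m + 1 + 1) ≤ a / (m + 1) := div_le_div_of_nonneg_left (by linarith) (by positivity) (by linarith)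
  have h := antitoneOn_eval_binomialLowerTailInterpolation hT hn ⟨le_rfl, hc⟩ ⟨hc, le_rfl⟩ hc
  have hy₀ : a - (m + 1) * (a / (m + 1)) = 0 := by field_simp; ring
  have hy₁ : a - (m + 1) * (a / (m + 1 + 1)) = a / (m + 1 + 1) := by field_simp; ring
  simp only [eval_binomialLowerTailInterpolation, Nat.cast_add, Nat.cast_one, hy₀, hy₁] at h
  rw [binomialLowerTail_succ_left ℝ (m + 1), Nat.add_sub_cancel]
  simpa using h

theorem eval_binomialLowerTail_le_of_le {n n' T : ℕ} {a : ℝ} (hT : T + 1 ≤ a) (hn : a ≤ n)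
    (hnn' : n ≤ n') :
    (binomialLowerTail ℝ n (T + 1)).eval (a / n) ≤
      (binomialLowerTail ℝ n' (T + 1)).eval (a / n') :=
  Nat.rel_of_forall_rel_succ_of_le_of_le (· ≤ ·)
    (f := fun k : ℕ => (binomialLowerTail ℝ k (T + 1)).eval (a / k)) (fun k hk => by
      simpa using eval_binomialLowerTail_le_succ hT (hn.trans (by exact_mod_cast hk))) le_rfl hnn'

open Filter Topology Nat in
theorem tendsto_eval_binomialLowerTail (M : ℕ) (a : ℝ) :
    Tendsto (fun n : ℕ => (binomialLowerTail ℝ n M).eval (a / n)) atTop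
      (𝓝 (Real.exp (-a) * ∑ i ∈ range M, a ^ i / i !)) := by
  have hmean : Tendsto (fun n : ℕ => n * (a / n)) atTop (𝓝 a) :=
    tendsto_const_nhds.congr' <| by
      filter_upwards [eventually_ne_atTop 0] with n hn
      field_simp
  simp only [mul_sum, binomialLowerTail, eval_finsetSum]
  refine tendsto_finsetSum _ fun i _ => ?_
  simpa [bernsteinPolynomial, mul_div_assoc] using
    ProbabilityTheory.tendsto_choose_mul_pow_of_tendsto_mul_atTop i hmean

open Nat in
theorem eval_binomialLowerTail_le_poisson {n T : ℕ} {a : ℝ} (hT : T + 1 ≤ a) (hn : a ≤ n) :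
    (binomialLowerTail ℝ n (T + 1)).eval (a / n) ≤
      Real.exp (-a) * ∑ i ∈ range (T + 1), a ^ i / i ! :=
  ge_of_tendsto (tendsto_eval_binomialLowerTail _ a)
    (Filter.eventually_atTop.2 ⟨n, fun _ h => eval_binomialLowerTail_le_of_le hT hn h⟩)

end

theorem binomial_lower_tail_le_general (p M2 : ℝ) (T : ℕ) (hp : 0 < p) (hp1 : p < 1)
    (hT : (T : ℝ) ≤ M2 - 1) :
    (∑ k ∈ Finset.range (T + 1),
        ((⌈M2 / (1 - p)⌉₊).choose k : ℝ) * (1 - p) ^ k * p ^ (⌈M2 / (1 - p)⌉₊ - k)) ≤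
      Real.exp (-M2) * ∑ i ∈ Finset.range (T + 1), M2 ^ i / (i.factorial : ℝ) ∧
    ∀ q : ℝ, p ≤ q → q < 1 → ∀ j : ℕ, (j : ℝ) = M2 / (1 - q) →
      (∑ k ∈ Finset.range (T + 1),
          ((⌈M2 / (1 - p)⌉₊).choose k : ℝ) * (1 - p) ^ k * p ^ (⌈M2 / (1 - p)⌉₊ - k)) ≤
        ∑ i ∈ Finset.range (T + 1), (j.choose i : ℝ) * (1 - q) ^ i * q ^ (j - i) := by
  set n := ⌈M2 / (1 - p)⌉₊
  have hT' : (T : ℝ) + 1 ≤ M2 := by linarith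
  have hM2 : 0 < M2 := by linarith [(T.cast_nonneg : (0 : ℝ) ≤ T)]
  have hM2n : M2 ≤ n := (le_div_self hM2.le (by linarith) (by linarith)).trans (Nat.le_ceil _)
  have hpn : M2 / n ≤ 1 - p := by
    rw [div_le_iff₀ (hM2.trans_le hM2n), ← div_le_iff₀' (by linarith)]
    exact Nat.le_ceil _
  have hmono : (binomialLowerTail ℝ n (T + 1)).eval (1 - p) ≤
      (binomialLowerTail ℝ n (T + 1)).eval (M2 / n) :=
    antitoneOn_eval_binomialLowerTail n (T + 1) ⟨by positivity, by linarith⟩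
      ⟨by linarith, by linarith⟩ hpn
  rw [← eval_one_sub_binomialLowerTail]
  refine ⟨hmono.trans (eval_binomialLowerTail_le_poisson hT' hM2n), fun q hpq hq1 j hj => ?_⟩
  have hnj : n ≤ j :=
    Nat.ceil_le.2 <| hj ▸ div_le_div_of_nonneg_left hM2.le (by linarith) (by linarith)
  rw [← eval_one_sub_binomialLowerTail, show 1 - q = M2 / j by rw [hj, div_div_cancel₀ hM2.ne']]
  exact hmono.trans (eval_binomialLowerTail_le_of_le hT' hM2n hnj)

/-- For `Z ~ Binomial(⌈M₂/(1-p)⌉, 1-p)` and an integer `T ≤ M₂ - 1`,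
`Pr[Z ≤ T] ≤ e^{-M₂} Σ_{i=0}^{T} M₂^i/i!`; moreover, for any `q ≥ p` such that
`M₂/(1-q)` is an integer `j`, `Pr[Z ≤ T] ≤ Σ_{i=0}^{T} C(j,i)(1-q)^i q^{j-i}`. -/
theorem binomial_lower_tail_le (p M2 : ℝ) (T : ℕ) (hp : 0 < p) (hp1 : p < 1)
    (hM2 : 0 ≤ M2) (hT : (T : ℝ) ≤ M2 - 1) :
    (∑ k ∈ Finset.range (T + 1),
        ((⌈M2 / (1 - p)⌉₊).choose k : ℝ) * (1 - p) ^ k * p ^ (⌈M2 / (1 - p)⌉₊ - k)) ≤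
      Real.exp (-M2) * ∑ i ∈ Finset.range (T + 1), M2 ^ i / (i.factorial : ℝ) ∧
    ∀ q : ℝ, p ≤ q → q < 1 → ∀ j : ℕ, (j : ℝ) = M2 / (1 - q) →
      (∑ k ∈ Finset.range (T + 1),
          ((⌈M2 / (1 - p)⌉₊).choose k : ℝ) * (1 - p) ^ k * p ^ (⌈M2 / (1 - p)⌉₊ - k)) ≤
        ∑ i ∈ Finset.range (T + 1), (j.choose i : ℝ) * (1 - q) ^ i * q ^ (j - i) :=
  binomial_lower_tail_le_general p M2 T hp hp1 hT
end
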